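/- If p ∈ Q⁰_λ, then #(p) = { (α, Z^p_α, d^p_α) : α ∈ C^p } is a strongly disjoint element of Q*_λ and fil(p) = fil*(#(p)). Conversely, if r ∈ Q*_λ is strongly disjoint, then fil*(r) = fil(p) for some p ∈ Q⁰_λ. -/

import Mathlib

open Set

noncomputable section

def IsUltrafilterOn {α : Type*} (Z : Set α) (d : Set (Set α)) : Prop :=
  (∀ A ∈ d, A ⊆ Z) ∧ Z ∈ d ∧ ∅ ∉ d ∧
  (∀ A B : Set α, A ∈ d → A ⊆ B → B ⊆ Z → B ∈ d) ∧
  (∀ A B : Set α, A ∈ d → B ∈ d → A ∩ B ∈ d) ∧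
  (∀ A : Set α, A ⊆ Z → (A ∈ d ∨ Z \ A ∈ d))

def IsNonprincipalOn {α : Type*} (Z : Set α) (d : Set (Set α)) : Prop :=
  IsUltrafilterOn Z d ∧ ∀ x : α, {x} ∉ d

def IsClubIn (C : Set Ordinal) (lam : Ordinal) : Prop :=
  C ⊆ Iio lam ∧ (∀ β < lam, ∃ δ ∈ C, β < δ) ∧
  (∀ β < lam, β ≠ 0 → sSup (C ∩ Iio β) = β → β ∈ C)

def nextIn (C : Set Ordinal) (δ : Ordinal) : Ordinal := sInf (C \ Iic δ)

/-- An element of `Q⁰_λ`: a club `C` of limit ordinals below `λ`, together with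
a non-principal ultrafilter `d δ` on the interval `Z_δ = [δ, min(C ∖ (δ+1)))` for each `δ ∈ C`. -/
structure QZero (lam : Ordinal) where
  C : Set Ordinal
  d : Ordinal → Set (Set Ordinal)
  club : IsClubIn C lam
  limit : ∀ δ ∈ C, Order.IsSuccLimit δ
  ultra : ∀ δ ∈ C, IsNonprincipalOn (Ico δ (nextIn C δ)) (d δ)

def QZero.Z {lam : Ordinal} (p : QZero lam) (δ : Ordinal) : Set Ordinal :=
  Ico δ (nextIn p.C δ)

def fil {lam : Ordinal} (p : QZero lam) : Set (Set Ordinal) :=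
  {A | A ⊆ Iio lam ∧ ∃ ε < lam, ∀ δ ∈ p.C, ε ≤ δ → A ∩ p.Z δ ∈ p.d δ}

def le0 {lam : Ordinal} (p q : QZero lam) : Prop := fil p ⊆ fil q

def filG {lam : Ordinal} (G : Set (QZero lam)) : Set (Set Ordinal) :=
  ⋃ p ∈ G, fil p

/-- `r ∈ Q*_λ`: a family of triples `(α, Z, d)` with `α < λ`, `Z ⊆ [α, λ)` infinite of
size `< λ`, `d` a non-principal ultrafilter on `Z`, only `< λ` triples per first
coordinate, and `|r| = λ`. -/
def IsQStar (κ : Cardinal.{0}) (r : Set (Ordinal × Set Ordinal × Set (Set Ordinal))) : Prop :=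
  (∀ t ∈ r, t.1 < κ.ord ∧ t.2.1 ⊆ Ico t.1 κ.ord ∧
      Cardinal.aleph0 ≤ Cardinal.mk ↥t.2.1 ∧ Cardinal.mk ↥t.2.1 < Cardinal.lift.{1,0} κ ∧
      IsNonprincipalOn t.2.1 t.2.2) ∧
  (∀ ξ < κ.ord, Cardinal.mk ↥{t | t ∈ r ∧ t.1 = ξ} < Cardinal.lift.{1,0} κ) ∧
  Cardinal.mk ↥r = Cardinal.lift.{1,0} κ

def filStar (κ : Cardinal.{0}) (r : Set (Ordinal × Set Ordinal × Set (Set Ordinal))) :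
    Set (Set Ordinal) :=
  {A | A ⊆ Iio κ.ord ∧ ∃ ε < κ.ord, ∀ t ∈ r, ε ≤ t.1 → A ∩ t.2.1 ∈ t.2.2}

def StronglyDisjoint (r : Set (Ordinal × Set Ordinal × Set (Set Ordinal))) : Prop :=
  (∀ t₁ ∈ r, ∀ t₂ ∈ r, t₁.1 = t₂.1 → t₁ = t₂) ∧
  (∀ t₁ ∈ r, ∀ t₂ ∈ r, t₁.1 < t₂.1 → t₁.2.1 ⊆ Iio t₂.1)

/-- `#(p) = { (α, Z^p_α, d^p_α) : α ∈ C^p }`. -/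
def hashQ {lam : Ordinal} (p : QZero lam) : Set (Ordinal × Set Ordinal × Set (Set Ordinal)) :=
  {t | ∃ α ∈ p.C, t = (α, p.Z α, p.d α)}

/-!
For `p ∈ Q⁰_λ` everything is read off from the definitions; the only cardinal arithmetic is that a
club in a regular `λ` has size `λ`.

Conversely, let `r` be strongly disjoint. For a triple `t = (α, Z, d)` let `bound t` be the least
`β` with `Z ∩ β ∈ d`: it is a limit ordinal above `α` because `d` is non-principal, and strong
disjointness puts no other bound into `(α, bound t)`. The first coordinates are unbounded in `λ`
(regularity and `|r| = λ`), so the closure `C` of the bounds is a club of limit ordinals. The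
successor in `C` of any `δ ∈ C` is the bound of a unique triple `t`, and `δ ≤ α`; take for `d_δ`
the trace of its ultrafilter on `[δ, bound t)`, on which `d` concentrates. Every triple `t` is
attached in this way to the largest point of `C` below its first coordinate, as soon as there is
one, so `fil(p)` and `fil*(r)` ask for the same sets.
-/

namespace IsUltrafilterOn

variable {α : Type*} {Z A B : Set α} {d : Set (Set α)}

lemma nonempty_of_mem (hd : IsUltrafilterOn Z d) (hA : A ∈ d) : A.Nonempty :=
  nonempty_iff_ne_empty.2 fun h => hd.2.2.1 (h ▸ hA)

lemma mem_of_superset (hd : IsUltrafilterOn Z d) (hA : A ∈ d) (hAB : A ⊆ B) (hB : B ⊆ Z) :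
    B ∈ d :=
  hd.2.2.2.1 A B hA hAB hB

lemma inter_mem (hd : IsUltrafilterOn Z d) (hA : A ∈ d) (hB : B ∈ d) : A ∩ B ∈ d :=
  hd.2.2.2.2.1 A B hA hB

lemma diff_mem (hd : IsUltrafilterOn Z d) (hA : A ⊆ Z) (hA' : A ∉ d) : Z \ A ∈ d :=
  (hd.2.2.2.2.2 A hA).resolve_left hA'

end IsUltrafilterOn

lemma IsNonprincipalOn.inter_singleton_notMem {α : Type*} {Z : Set α} {d : Set (Set α)}
    (hd : IsNonprincipalOn Z d) (x : α) : Z ∩ {x} ∉ d := by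
  intro hx
  obtain ⟨y, hyZ, rfl⟩ := hd.1.nonempty_of_mem hx
  exact hd.2 y (by rwa [inter_eq_right.2 (singleton_subset_iff.2 hyZ)] at hx)

def traceOn {α : Type*} (I Z : Set α) (d : Set (Set α)) : Set (Set α) :=
  {S | S ⊆ I ∧ S ∩ Z ∈ d}

section traceOn

variable {α : Type*} {I Z A : Set α} {d : Set (Set α)}

lemma inter_mem_traceOn_iff (hd : IsUltrafilterOn Z d) (hI : Z ∩ I ∈ d) :
    A ∩ I ∈ traceOn I Z d ↔ A ∩ Z ∈ d := by
  refine ⟨fun h => ?_, fun h => ⟨inter_subset_right, ?_⟩⟩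
  · exact hd.mem_of_superset h.2 (fun _ hx => ⟨hx.1.1, hx.2⟩) inter_subset_right
  · have : A ∩ Z ∩ (Z ∩ I) = A ∩ I ∩ Z := by ext; simp only [mem_inter_iff]; tauto
    exact this ▸ hd.inter_mem h hI

lemma IsNonprincipalOn.traceOn (hd : IsNonprincipalOn Z d) (hI : Z ∩ I ∈ d) :
    IsNonprincipalOn I (traceOn I Z d) := by
  have hu := hd.1
  refine ⟨⟨fun A hA => hA.1, ⟨subset_rfl, inter_comm Z I ▸ hI⟩, fun h => ?_,
    fun A B hA hAB hBI => ⟨hBI, ?_⟩, fun A B hA hB => ⟨inter_subset_left.trans hA.1, ?_⟩,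
    fun A hAI => ?_⟩, fun x hx => hd.inter_singleton_notMem x (inter_comm {x} Z ▸ hx.2)⟩
  · exact hu.2.2.1 (by simpa using h.2)
  · exact hu.mem_of_superset hA.2 (inter_subset_inter_left _ hAB) inter_subset_right
  · have : A ∩ B ∩ Z = (A ∩ Z) ∩ (B ∩ Z) := by ext; simp only [mem_inter_iff]; tauto
    exact this ▸ hu.inter_mem hA.2 hB.2
  · rcases hu.2.2.2.2.2 (A ∩ Z) inter_subset_right with h | h
    · exact Or.inl ⟨hAI, h⟩
    · refine Or.inr ⟨sdiff_subset,
        hu.mem_of_superset (hu.inter_mem h hI) ?_ inter_subset_right⟩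
      rintro x ⟨⟨hxZ, hxA⟩, -, hxI⟩
      exact ⟨⟨hxI, fun hx => hxA ⟨hx, hxZ⟩⟩, hxZ⟩

end traceOn

def ultraBound (Z : Set Ordinal) (d : Set (Set Ordinal)) : Ordinal :=
  sInf {β | Z ∩ Iio β ∈ d}

section ultraBound

variable {Z : Set Ordinal} {d : Set (Set Ordinal)} {γ : Ordinal}

lemma inter_Iio_mem_of_subset (hd : IsUltrafilterOn Z d) (hZ : Z ⊆ Iio γ) : Z ∩ Iio γ ∈ d := by
  rw [inter_eq_left.2 hZ]
  exact hd.2.1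

lemma inter_Iio_ultraBound_mem (hd : IsUltrafilterOn Z d) (hZ : Z ⊆ Iio γ) :
    Z ∩ Iio (ultraBound Z d) ∈ d :=
  csInf_mem (s := {β | Z ∩ Iio β ∈ d}) ⟨γ, inter_Iio_mem_of_subset hd hZ⟩

lemma inter_Iio_notMem_of_lt_ultraBound (hγ : γ < ultraBound Z d) : Z ∩ Iio γ ∉ d :=
  notMem_of_lt_csInf (s := {β | Z ∩ Iio β ∈ d}) hγ (OrderBot.bddBelow _)

lemma ultraBound_le (hd : IsUltrafilterOn Z d) (hZ : Z ⊆ Iio γ) : ultraBound Z d ≤ γ :=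
  csInf_le' (s := {β | Z ∩ Iio β ∈ d}) (inter_Iio_mem_of_subset hd hZ)

lemma inter_Ico_ultraBound_mem (hd : IsUltrafilterOn Z d) {β : Ordinal} (hZ : Z ⊆ Iio β)
    (hγ : γ < ultraBound Z d) : Z ∩ Ico γ (ultraBound Z d) ∈ d := by
  have hfar : Z \ Iio γ ∈ d := by
    simpa [sdiff_inter_self_eq_sdiff] using
      hd.diff_mem inter_subset_left (inter_Iio_notMem_of_lt_ultraBound hγ)
  refine hd.mem_of_superset (hd.inter_mem (inter_Iio_ultraBound_mem hd hZ) hfar) ?_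
    inter_subset_left
  rintro x ⟨⟨hxZ, hxb⟩, -, hxγ⟩
  exact ⟨hxZ, not_lt.1 hxγ, hxb⟩

lemma lt_ultraBound (hd : IsUltrafilterOn Z d) {β : Ordinal} (hZ : Z ⊆ Ico γ β) :
    γ < ultraBound Z d := by
  obtain ⟨x, hxZ, hxb⟩ :=
    hd.nonempty_of_mem (inter_Iio_ultraBound_mem hd fun _ hx => (hZ hx).2)
  exact (hZ hxZ).1.trans_lt hxb

lemma isSuccLimit_ultraBound (hd : IsNonprincipalOn Z d) {β : Ordinal} (hZ : Z ⊆ Iio β) :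
    Order.IsSuccLimit (ultraBound Z d) := by
  refine Ordinal.isSuccLimit_iff.2 ⟨fun h0 => ?_, Order.isSuccPrelimit_iff_succ_ne.2 ?_⟩
  · exact hd.1.2.2.1 (by simpa [h0] using inter_Iio_ultraBound_mem hd.1 hZ)
  · rintro γ hγ
    have := inter_Ico_ultraBound_mem hd.1 hZ (hγ ▸ Order.lt_succ γ)
    rw [← hγ, Order.Ico_succ_right_eq_insert le_rfl, Ico_self, insert_empty_eq] at this
    exact hd.inter_singleton_notMem γ this

end ultraBound

section nextIn

variable {C : Set Ordinal} {δ c : Ordinal}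

lemma nextIn_mem (h : ∃ c ∈ C, δ < c) : nextIn C δ ∈ C ∧ δ < nextIn C δ := by
  obtain ⟨c, hc, hδc⟩ := h
  simpa [nextIn] using csInf_mem (s := C \ Iic δ) ⟨c, hc, not_le.2 hδc⟩

lemma nextIn_le (hc : c ∈ C) (hδc : δ < c) : nextIn C δ ≤ c :=
  csInf_le' ⟨hc, not_le.2 hδc⟩

lemma nextIn_eq (hc : c ∈ C) (hδc : δ < c) (hmin : ∀ x ∈ C, δ < x → c ≤ x) :
    nextIn C δ = c :=
  (nextIn_le hc hδc).antisymm (le_csInf ⟨c, hc, not_le.2 hδc⟩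
    fun x hx => hmin x hx.1 (not_le.1 hx.2))

lemma IsClubIn.nextIn_mem {lam : Ordinal} (hC : IsClubIn C lam) (hδ : δ < lam) :
    nextIn C δ ∈ C ∧ δ < nextIn C δ :=
  _root_.nextIn_mem (hC.2.1 δ hδ)

end nextIn

lemma infinite_Ico_of_isSuccLimit {α : Type*} [LinearOrder α] [SuccOrder α] {a b : α}
    (hb : Order.IsSuccLimit b) (hab : a < b) : (Ico a b).Infinite := by
  intro hfin
  obtain ⟨m, hm, hmax⟩ := hfin.exists_maximal ⟨a, le_rfl, hab⟩
  have hsucc : Order.succ m ∈ Ico a b :=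
    ⟨hm.1.trans (Order.le_succ m), hb.succ_lt hm.2⟩
  exact (Order.lt_succ_of_not_isMax (not_isMax_of_lt hm.2)).not_ge (hmax hsucc (Order.le_succ m))

lemma mk_eq_of_forall_exists_lt {κ : Cardinal.{0}} (hreg : κ.IsRegular) {C : Set Ordinal}
    (hC : C ⊆ Iio κ.ord) (hunb : ∀ β < κ.ord, ∃ δ ∈ C, β < δ) :
    Cardinal.mk C = Cardinal.lift.{1} κ := by
  refine le_antisymm ?_ ?_
  · calc Cardinal.mk C ≤ Cardinal.mk (Iio κ.ord) := Cardinal.mk_le_mk_of_subset hC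
      _ = Cardinal.lift.{1} κ := by rw [Cardinal.mk_Iio_ordinal, Cardinal.card_ord]
  · have hcof : IsCofinal {x : Iio κ.ord | x.1 ∈ C} := fun a => by
      obtain ⟨δ, hδ, hlt⟩ := hunb a.1 a.2
      exact ⟨⟨δ, hC hδ⟩, hδ, hlt.le⟩
    have := Order.cof_le hcof
    rw [Ordinal.cof_Iio, ← Ordinal.lift_cof, hreg.cof_ord] at this
    exact this.trans_eq (Cardinal.mk_congr (Equiv.subtypeSubtypeEquivSubtype fun h => hC h))

namespace QZero

variable {κ : Cardinal.{0}} (p : QZero κ.ord) {δ : Ordinal}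

lemma nextIn_lt_ord (hδ : δ ∈ p.C) : nextIn p.C δ < κ.ord :=
  p.club.1 (p.club.nextIn_mem (p.club.1 hδ)).1

lemma Z_subset_Ico (hδ : δ ∈ p.C) : p.Z δ ⊆ Ico δ κ.ord :=
  fun _ hx => ⟨hx.1, hx.2.trans (p.nextIn_lt_ord hδ)⟩

lemma Z_infinite (hδ : δ ∈ p.C) : (p.Z δ).Infinite :=
  have hnext := p.club.nextIn_mem (p.club.1 hδ)
  infinite_Ico_of_isSuccLimit (p.limit _ hnext.1) hnext.2

lemma mk_Z_lt (hδ : δ ∈ p.C) : Cardinal.mk (p.Z δ) < Cardinal.lift.{1} κ :=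
  calc Cardinal.mk (p.Z δ) ≤ Cardinal.mk (Iio (nextIn p.C δ)) :=
        Cardinal.mk_le_mk_of_subset fun _ hx => hx.2
    _ < Cardinal.lift.{1} κ := by
        rw [Cardinal.mk_Iio_ordinal, Cardinal.lift_lt, ← Cardinal.lt_ord]
        exact p.nextIn_lt_ord hδ

lemma hashQ_eq_image : hashQ p = (fun α => (α, p.Z α, p.d α)) '' p.C := by
  ext t
  simp [hashQ, eq_comm]

lemma mk_hashQ (hreg : κ.IsRegular) : Cardinal.mk (hashQ p) = Cardinal.lift.{1} κ := by
  rw [hashQ_eq_image, Cardinal.mk_image_eq fun _ _ h => congrArg Prod.fst h,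
    mk_eq_of_forall_exists_lt hreg p.club.1 p.club.2.1]

lemma isQStar_hashQ (hreg : κ.IsRegular) : IsQStar κ (hashQ p) := by
  refine ⟨?_, fun ξ _ => ?_, p.mk_hashQ hreg⟩
  · rintro _ ⟨α, hα, rfl⟩
    exact ⟨p.club.1 hα, p.Z_subset_Ico hα,
      Cardinal.aleph0_le_mk_iff.2 (p.Z_infinite hα).to_subtype, p.mk_Z_lt hα, p.ultra α hα⟩
  · have hsub : {t | t ∈ hashQ p ∧ t.1 = ξ}.Subsingleton := by
      rintro _ ⟨⟨α, -, rfl⟩, rfl⟩ _ ⟨⟨α', -, rfl⟩, h⟩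
      cases h
      rfl
    calc Cardinal.mk {t | t ∈ hashQ p ∧ t.1 = ξ} ≤ 1 :=
          Cardinal.mk_le_one_iff_set_subsingleton.2 hsub
      _ < Cardinal.aleph0 := Cardinal.one_lt_aleph0
      _ ≤ Cardinal.lift.{1} κ := by simpa using hreg.aleph0_le

lemma stronglyDisjoint_hashQ : StronglyDisjoint (hashQ p) := by
  constructor
  · rintro _ ⟨α, -, rfl⟩ _ ⟨α', -, rfl⟩ (rfl : α = α')
    rfl
  · rintro _ ⟨α, -, rfl⟩ _ ⟨α', hα', rfl⟩ (h : α < α') x hx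
    exact hx.2.trans_le (nextIn_le hα' h)

lemma filStar_hashQ : filStar κ (hashQ p) = fil p := by
  ext A
  constructor
  · rintro ⟨hA, ε, hε, h⟩
    exact ⟨hA, ε, hε, fun δ hδ hεδ => h _ ⟨δ, hδ, rfl⟩ hεδ⟩
  · rintro ⟨hA, ε, hε, h⟩
    refine ⟨hA, ε, hε, ?_⟩
    rintro _ ⟨α, hα, rfl⟩ hεα
    exact h α hα hεα

end QZero

lemma isSuccLimit_of_mem_closure {α : Type*} [LinearOrder α] [TopologicalSpace α]
    [OrderTopology α] [SuccOrder α] [NoMaxOrder α] {B : Set α} {a : α}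
    (hB : ∀ b ∈ B, Order.IsSuccLimit b) (ha : a ∈ closure B) : Order.IsSuccLimit a := by
  by_contra h
  obtain ⟨x, rfl : x = a, hxB⟩ :=
    mem_closure_iff.1 ha {a} (SuccOrder.isOpen_singleton_iff.2 h) rfl
  exact h (hB x hxB)

section closure

variable {B : Set Ordinal} {o δ : Ordinal}

lemma isClubIn_closure_inter_Iio (hB : B ⊆ Iio o) (hunb : ∀ β < o, ∃ b ∈ B, β < b) :
    IsClubIn (closure B ∩ Iio o) o := by
  refine ⟨inter_subset_right, fun β hβ => ?_, fun β hβ h0 hsup => ⟨?_, hβ⟩⟩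
  · obtain ⟨b, hb, hβb⟩ := hunb β hβ
    exact ⟨b, ⟨subset_closure hb, hB hb⟩, hβb⟩
  · have hne : (closure B ∩ Iio o ∩ Iio β).Nonempty := by
      by_contra h
      rw [not_nonempty_iff_eq_empty.1 h, csSup_empty] at hsup
      exact h0 hsup.symm
    have := csSup_mem_closure hne ⟨β, fun _ hx => hx.2.le⟩
    rw [hsup] at this
    exact closure_minimal (fun _ hx => hx.1.1) isClosed_closure this

lemma nextIn_closure_inter_Iio (hB : B ⊆ Iio o) (h : ∃ b ∈ B, δ < b) :
    nextIn (closure B ∩ Iio o) δ = nextIn B δ := by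
  obtain ⟨hβB, hδβ⟩ := nextIn_mem h
  have hgap : Disjoint (closure B) (Ioo δ (nextIn B δ)) :=
    (disjoint_left.2 fun _ hb hb' => (nextIn_le hb hb'.1).not_gt hb'.2).closure_left isOpen_Ioo
  exact nextIn_eq ⟨subset_closure hβB, hB hβB⟩ hδβ
    fun x hx hδx => not_lt.1 fun hxβ => disjoint_left.1 hgap hx.1 ⟨hδx, hxβ⟩

end closure

def bound (t : Ordinal × Set Ordinal × Set (Set Ordinal)) : Ordinal :=
  ultraBound t.2.1 t.2.2

def boundClub (κ : Cardinal.{0}) (r : Set (Ordinal × Set Ordinal × Set (Set Ordinal))) :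
    Set Ordinal :=
  closure (bound '' r) ∩ Iio κ.ord

def boundUltra (κ : Cardinal.{0}) (r : Set (Ordinal × Set Ordinal × Set (Set Ordinal)))
    (δ : Ordinal) : Set (Set Ordinal) :=
  {S | ∃ t ∈ r, bound t = nextIn (boundClub κ r) δ ∧
    S ∈ traceOn (Ico δ (nextIn (boundClub κ r) δ)) t.2.1 t.2.2}

namespace IsQStar

variable {κ : Cardinal.{0}} {r : Set (Ordinal × Set Ordinal × Set (Set Ordinal))}
  {t t' : Ordinal × Set Ordinal × Set (Set Ordinal)} {δ : Ordinal}

lemma subset_Ico (hr : IsQStar κ r) (ht : t ∈ r) : t.2.1 ⊆ Ico t.1 κ.ord := (hr.1 t ht).2.1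

lemma isNonprincipalOn (hr : IsQStar κ r) (ht : t ∈ r) : IsNonprincipalOn t.2.1 t.2.2 :=
  (hr.1 t ht).2.2.2.2

lemma exists_lt_fst (hr : IsQStar κ r) (hreg : κ.IsRegular) {β : Ordinal} (hβ : β < κ.ord) :
    ∃ t ∈ r, β < t.1 := by
  by_contra! h
  have hcover : r ⊆ ⋃ ξ ∈ Iic β, {t | t ∈ r ∧ t.1 = ξ} :=
    fun t ht => mem_biUnion (h t ht) ⟨ht, rfl⟩
  have hsmall : Cardinal.mk (Iic β) < Cardinal.lift.{1} κ := by
    rw [← Order.Iio_succ, Cardinal.mk_Iio_ordinal, Cardinal.lift_lt, ← Cardinal.lt_ord]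
    exact (Cardinal.isSuccLimit_ord hreg.aleph0_le).succ_lt hβ
  have := (Cardinal.mk_le_mk_of_subset hcover).trans_lt
    ((Cardinal.card_biUnion_lt_iff_forall_of_isRegular hreg.lift hsmall).2
      fun ξ hξ => hr.2.1 ξ (hξ.trans_lt hβ))
  exact this.ne hr.2.2

lemma fst_lt_bound (hr : IsQStar κ r) (ht : t ∈ r) : t.1 < bound t :=
  lt_ultraBound (hr.isNonprincipalOn ht).1 (hr.subset_Ico ht)

lemma isSuccLimit_bound (hr : IsQStar κ r) (ht : t ∈ r) : Order.IsSuccLimit (bound t) :=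
  isSuccLimit_ultraBound (hr.isNonprincipalOn ht) fun _ hx => (hr.subset_Ico ht hx).2

lemma bound_le_fst (hr : IsQStar κ r) (hsd : StronglyDisjoint r) (ht : t ∈ r) (ht' : t' ∈ r)
    (h : t.1 < t'.1) : bound t ≤ t'.1 :=
  ultraBound_le (hr.isNonprincipalOn ht).1 (hsd.2 t ht t' ht' h)

lemma bound_lt_ord (hr : IsQStar κ r) (hreg : κ.IsRegular) (hsd : StronglyDisjoint r)
    (ht : t ∈ r) : bound t < κ.ord :=
  have ⟨t', ht', h⟩ := hr.exists_lt_fst hreg (hr.1 t ht).1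
  (hr.bound_le_fst hsd ht ht' h).trans_lt (hr.1 t' ht').1

lemma injOn_bound (hr : IsQStar κ r) (hsd : StronglyDisjoint r) : InjOn bound r := by
  intro t ht t' ht' h
  rcases lt_trichotomy t.1 t'.1 with hlt | heq | hgt
  · exact absurd (h ▸ hr.bound_le_fst hsd ht ht' hlt) (hr.fst_lt_bound ht').not_ge
  · exact hsd.1 t ht t' ht' heq
  · exact absurd (h ▸ hr.bound_le_fst hsd ht' ht hgt) (hr.fst_lt_bound ht).not_ge

lemma bound_notMem_Ioo (hr : IsQStar κ r) (hsd : StronglyDisjoint r) (ht : t ∈ r)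
    (ht' : t' ∈ r) : bound t' ∉ Ioo t.1 (bound t) := by
  rintro ⟨hlo, hhi⟩
  rcases lt_trichotomy t'.1 t.1 with hlt | heq | hgt
  · exact (hr.bound_le_fst hsd ht' ht hlt).not_gt hlo
  · exact hhi.ne (congrArg bound (hsd.1 t' ht' t ht heq))
  · exact ((hr.bound_le_fst hsd ht ht' hgt).trans_lt (hr.fst_lt_bound ht')).not_gt hhi

lemma disjoint_boundClub_Ioo (hr : IsQStar κ r) (hsd : StronglyDisjoint r) (ht : t ∈ r) :
    Disjoint (boundClub κ r) (Ioo t.1 (bound t)) :=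
  ((disjoint_left.2 <| by
    rintro _ ⟨t', ht', rfl⟩
    exact hr.bound_notMem_Ioo hsd ht ht').closure_left isOpen_Ioo).mono_left
    inter_subset_left

lemma image_bound_subset_Iio (hr : IsQStar κ r) (hreg : κ.IsRegular) (hsd : StronglyDisjoint r) :
    bound '' r ⊆ Iio κ.ord :=
  forall_mem_image.2 fun _ => hr.bound_lt_ord hreg hsd

lemma exists_bound_gt (hr : IsQStar κ r) (hreg : κ.IsRegular) {β : Ordinal} (hβ : β < κ.ord) :
    ∃ b ∈ bound '' r, β < b :=
  have ⟨t, ht, h⟩ := hr.exists_lt_fst hreg hβ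
  ⟨bound t, mem_image_of_mem _ ht, h.trans (hr.fst_lt_bound ht)⟩

lemma isClubIn_boundClub (hr : IsQStar κ r) (hreg : κ.IsRegular) (hsd : StronglyDisjoint r) :
    IsClubIn (boundClub κ r) κ.ord :=
  isClubIn_closure_inter_Iio (hr.image_bound_subset_Iio hreg hsd) fun _ => hr.exists_bound_gt hreg

lemma exists_bound_eq_nextIn (hr : IsQStar κ r) (hreg : κ.IsRegular) (hsd : StronglyDisjoint r)
    (hδ : δ < κ.ord) : ∃ t ∈ r, bound t = nextIn (boundClub κ r) δ := by
  rw [boundClub, nextIn_closure_inter_Iio (hr.image_bound_subset_Iio hreg hsd)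
    (hr.exists_bound_gt hreg hδ)]
  exact (nextIn_mem (hr.exists_bound_gt hreg hδ)).1

lemma le_fst_of_mem_boundClub (hr : IsQStar κ r) (hsd : StronglyDisjoint r)
    (hδ : δ ∈ boundClub κ r) (ht : t ∈ r) (h : δ < bound t) : δ ≤ t.1 :=
  not_lt.1 fun hlt => disjoint_left.1 (hr.disjoint_boundClub_Ioo hsd ht) hδ ⟨hlt, h⟩

lemma exists_nextIn_eq_bound (hr : IsQStar κ r) (hreg : κ.IsRegular) (hsd : StronglyDisjoint r)
    (ht : t ∈ r) {c : Ordinal} (hc : c ∈ boundClub κ r) (hct : c ≤ t.1) :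
    ∃ δ ∈ boundClub κ r, c ≤ δ ∧ nextIn (boundClub κ r) δ = bound t := by
  set F := closure (bound '' r) ∩ Iic t.1
  have hbdd : BddAbove F := ⟨t.1, fun _ hx => hx.2⟩
  have hmem : sSup F ∈ F :=
    (isClosed_closure.inter isClosed_Iic).csSup_mem ⟨c, hc.1, hct⟩ hbdd
  refine ⟨sSup F, ⟨hmem.1, hmem.2.trans_lt (hr.1 t ht).1⟩, le_csSup hbdd ⟨hc.1, hct⟩,
    nextIn_eq ⟨subset_closure (mem_image_of_mem _ ht), hr.bound_lt_ord hreg hsd ht⟩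
      (hmem.2.trans_lt (hr.fst_lt_bound ht)) fun x hx hδx => not_lt.1 fun hxb => ?_⟩
  exact hδx.not_ge (le_csSup hbdd ⟨hx.1, hr.le_fst_of_mem_boundClub hsd hx ht hxb⟩)

lemma boundUltra_eq_traceOn (hr : IsQStar κ r) (hsd : StronglyDisjoint r) (ht : t ∈ r)
    (h : bound t = nextIn (boundClub κ r) δ) :
    boundUltra κ r δ = traceOn (Ico δ (bound t)) t.2.1 t.2.2 := by
  ext S
  refine ⟨?_, fun hS => ⟨t, ht, h, h ▸ hS⟩⟩
  rintro ⟨t', ht', h', hS⟩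
  obtain rfl := hr.injOn_bound hsd ht' ht (h'.trans h.symm)
  rwa [h]

lemma inter_Ico_bound_mem (hr : IsQStar κ r) (ht : t ∈ r) (hδ : δ < bound t) :
    t.2.1 ∩ Ico δ (bound t) ∈ t.2.2 :=
  inter_Ico_ultraBound_mem (hr.isNonprincipalOn ht).1 (fun _ hx => (hr.subset_Ico ht hx).2) hδ

lemma isNonprincipalOn_boundUltra (hr : IsQStar κ r) (hreg : κ.IsRegular)
    (hsd : StronglyDisjoint r) (hδ : δ ∈ boundClub κ r) :
    IsNonprincipalOn (Ico δ (nextIn (boundClub κ r) δ)) (boundUltra κ r δ) := by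
  obtain ⟨t, ht, h⟩ := hr.exists_bound_eq_nextIn hreg hsd hδ.2
  have hδt : δ < bound t := h ▸ ((hr.isClubIn_boundClub hreg hsd).nextIn_mem hδ.2).2
  rw [hr.boundUltra_eq_traceOn hsd ht h, ← h]
  exact (hr.isNonprincipalOn ht).traceOn (hr.inter_Ico_bound_mem ht hδt)

lemma inter_mem_boundUltra_iff (hr : IsQStar κ r) (hreg : κ.IsRegular)
    (hsd : StronglyDisjoint r) (hδ : δ ∈ boundClub κ r) (ht : t ∈ r)
    (h : bound t = nextIn (boundClub κ r) δ) {A : Set Ordinal} :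
    A ∩ Ico δ (nextIn (boundClub κ r) δ) ∈ boundUltra κ r δ ↔ A ∩ t.2.1 ∈ t.2.2 := by
  have hδt : δ < bound t := h ▸ ((hr.isClubIn_boundClub hreg hsd).nextIn_mem hδ.2).2
  rw [hr.boundUltra_eq_traceOn hsd ht h, ← h]
  exact inter_mem_traceOn_iff (hr.isNonprincipalOn ht).1 (hr.inter_Ico_bound_mem ht hδt)

def toQZero (hr : IsQStar κ r) (hreg : κ.IsRegular) (hsd : StronglyDisjoint r) :
    QZero κ.ord where
  C := boundClub κ r
  d := boundUltra κ r
  club := hr.isClubIn_boundClub hreg hsd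
  limit _ hδ := isSuccLimit_of_mem_closure (forall_mem_image.2 fun _ => hr.isSuccLimit_bound) hδ.1
  ultra _ hδ := hr.isNonprincipalOn_boundUltra hreg hsd hδ

theorem filStar_eq_fil_toQZero (hr : IsQStar κ r) (hreg : κ.IsRegular)
    (hsd : StronglyDisjoint r) : filStar κ r = fil (hr.toQZero hreg hsd) := by
  have hclub := hr.isClubIn_boundClub hreg hsd
  ext A
  constructor
  · rintro ⟨hA, ε, hε, h⟩
    refine ⟨hA, ε, hε, fun δ hδ hεδ => ?_⟩
    obtain ⟨t, ht, hb⟩ := hr.exists_bound_eq_nextIn hreg hsd hδ.2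
    have hδt : δ < bound t := hb ▸ (hclub.nextIn_mem hδ.2).2
    exact (hr.inter_mem_boundUltra_iff hreg hsd hδ ht hb).2
      (h t ht (hεδ.trans (hr.le_fst_of_mem_boundClub hsd hδ ht hδt)))
  · rintro ⟨hA, ε, hε, h⟩
    obtain ⟨c, hc, hεc⟩ := hclub.2.1 ε hε
    refine ⟨hA, c, hc.2, fun t ht hct => ?_⟩
    obtain ⟨δ, hδ, hcδ, hb⟩ := hr.exists_nextIn_eq_bound hreg hsd ht hc hct
    exact (hr.inter_mem_boundUltra_iff hreg hsd hδ ht hb.symm).1 (h δ hδ (hεc.le.trans hcδ))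

end IsQStar

theorem statement7_general (κ : Cardinal.{0}) (hreg : κ.IsRegular) :
    (∀ p : QZero κ.ord,
        IsQStar κ (hashQ p) ∧ StronglyDisjoint (hashQ p) ∧ filStar κ (hashQ p) = fil p) ∧
    (∀ r : Set (Ordinal × Set Ordinal × Set (Set Ordinal)),
        IsQStar κ r → StronglyDisjoint r → ∃ p : QZero κ.ord, filStar κ r = fil p) :=
  ⟨fun p => ⟨p.isQStar_hashQ hreg, p.stronglyDisjoint_hashQ, p.filStar_hashQ⟩,
    fun _ hr hsd => ⟨hr.toQZero hreg hsd, hr.filStar_eq_fil_toQZero hreg hsd⟩⟩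

/-- For `p ∈ Q⁰_λ`, `#(p)` is a strongly disjoint element of `Q*_λ` with
`fil*(#(p)) = fil(p)`; conversely every strongly disjoint `r ∈ Q*_λ` satisfies
`fil*(r) = fil(p)` for some `p ∈ Q⁰_λ`. -/
theorem statement7 (κ : Cardinal.{0}) (hreg : κ.IsRegular) (hunc : Cardinal.aleph0 < κ) :
    (∀ p : QZero κ.ord,
        IsQStar κ (hashQ p) ∧ StronglyDisjoint (hashQ p) ∧ filStar κ (hashQ p) = fil p) ∧
    (∀ r : Set (Ordinal × Set Ordinal × Set (Set Ordinal)),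
        IsQStar κ r → StronglyDisjoint r → ∃ p : QZero κ.ord, filStar κ r = fil p) :=
  statement7_general κ hreg
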